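/- Boundary derivative formulas and signs for the elliptic problem on [0,L] with monotone data: Let 0 < L < π/2, let g : [0,L] → ℝ be continuously differentiable with g ≥ 0 and g' ≥ 0 on [0,L], and let G : [0,L] → ℝ be twice continuously differentiable with 4G + G'' = g on [0,L] and G(0) = G(L) = 0. Then: G'(L) = (1/sin(2L)) ∫₀^L g(θ) sin(2θ) dθ; G'(0) = (cos(2L)/sin(2L)) ∫₀^L g(θ) sin(2θ) dθ − ∫₀^L g(θ) cos(2θ) dθ; and G'(L) ≥ 0, G'(0) ≤ 0, and G'(0) + G'(L) ≥ 0. -/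

import Mathlib

open Set Real intervalIntegral
open scoped Real

/-!
For `k² G + G'' = g`, the Wronskian-type expression
`G'(θ) sin (kθ - φ) - k G(θ) cos (kθ - φ)` has derivative `g(θ) sin (kθ - φ)`. With `k = 2`
and `G(0) = G(L) = 0` this gives, for every phase `φ`,
`∫₀^L g(θ) sin (2θ - φ) dθ = G'(L) sin (2L - φ) + G'(0) sin φ`.
The phases `φ = 0` and `φ = -π/2` give the two formulas. The phase `φ = 0` shows `G'(L) ≥ 0`
and `φ = 2L` shows `G'(0) ≤ 0`, since `g ≥ 0` and the kernel has constant sign. The phase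
`φ = L` gives `(G'(0) + G'(L)) sin L`; here the kernel is odd about `L/2`, so pairing `θ`
with `L - θ` and using that `g` is monotone shows that the integral is nonnegative.
-/

theorem monotoneOn_Icc_of_derivWithin_nonneg {f : ℝ → ℝ} {a b : ℝ}
    (hf : ContinuousOn f (Icc a b)) (hf' : DifferentiableOn ℝ f (Ioo a b))
    (hf'_nonneg : ∀ x ∈ Ioo a b, 0 ≤ derivWithin f (Icc a b) x) :
    MonotoneOn f (Icc a b) := by
  refine monotoneOn_of_deriv_nonneg (convex_Icc a b) hf (by rwa [interior_Icc]) ?_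
  intro x hx
  rw [interior_Icc] at hx
  rw [← derivWithin_of_mem_nhds (Icc_mem_nhds hx.1 hx.2)]
  exact hf'_nonneg x hx

theorem integral_mul_sin_two_mul_sub_nonneg {g : ℝ → ℝ} {L : ℝ} (hL0 : 0 ≤ L)
    (hLπ : L ≤ π) (hg : MonotoneOn g (Icc 0 L)) :
    0 ≤ ∫ θ in (0:ℝ)..L, g θ * sin (2 * θ - L) := by
  have hint : IntervalIntegrable g MeasureTheory.volume 0 L :=
    (uIcc_of_le hL0 ▸ hg).intervalIntegrable
  have hsin : ContinuousOn (fun θ => sin (2 * θ - L)) (uIcc 0 L) := by fun_prop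
  have hreflect : (∫ θ in (0:ℝ)..L, g (L - θ) * sin (2 * θ - L)) =
      -∫ θ in (0:ℝ)..L, g θ * sin (2 * θ - L) := by
    have h := integral_comp_sub_left (a := 0) (b := L) (fun θ => g θ * sin (2 * θ - L)) L
    simp only [sub_zero, sub_self] at h
    rw [← h, ← integral_neg]
    congr 1 with θ
    rw [show 2 * (L - θ) - L = -(2 * θ - L) by ring, sin_neg]
    ring
  have hpaired : 0 ≤ ∫ θ in (0:ℝ)..L, (g θ - g (L - θ)) * sin (2 * θ - L) := by
    refine integral_nonneg hL0 fun θ ⟨hθ0, hθL⟩ => ?_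
    have hθ : θ ∈ Icc 0 L := ⟨hθ0, hθL⟩
    have hθ' : L - θ ∈ Icc 0 L := ⟨by linarith, by linarith⟩
    rcases le_total θ (L / 2) with h | h
    · exact mul_nonneg_of_nonpos_of_nonpos (sub_nonpos.2 (hg hθ hθ' (by linarith)))
        (sin_nonpos_of_nonpos_of_neg_pi_le (by linarith) (by linarith))
    · exact mul_nonneg (sub_nonneg.2 (hg hθ' hθ (by linarith)))
        (sin_nonneg_of_nonneg_of_le_pi (by linarith) (by linarith))
  have hint' : IntervalIntegrable (fun θ => g (L - θ)) MeasureTheory.volume 0 L := by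
    simpa using (hint.comp_sub_left L).symm
  simp only [sub_mul] at hpaired
  rw [integral_sub (hint.mul_continuousOn hsin) (hint'.mul_continuousOn hsin), hreflect] at hpaired
  linarith

theorem hasDerivWithinAt_derivWithin_mul_sin_sub_mul_cos {G : ℝ → ℝ} {s : Set ℝ}
    {k φ x : ℝ} (hG : DifferentiableWithinAt ℝ G s x)
    (hG' : DifferentiableWithinAt ℝ (derivWithin G s) s x) :
    HasDerivWithinAt
      (fun θ => derivWithin G s θ * sin (k * θ - φ) - k * G θ * cos (k * θ - φ))
      ((k ^ 2 * G x + derivWithin (derivWithin G s) s x) * sin (k * x - φ)) s x := by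
  have hphase : HasDerivAt (fun θ => k * θ - φ) k x := by
    simpa using ((hasDerivAt_id x).const_mul k).sub_const φ
  refine ((hG'.hasDerivWithinAt.mul hphase.sin.hasDerivWithinAt).sub
    ((hG.hasDerivWithinAt.const_mul k).mul hphase.cos.hasDerivWithinAt)).congr_deriv ?_
  ring

theorem integral_mul_sin_eq_of_sq_mul_add_iteratedDerivWithin {g G : ℝ → ℝ} {a b k φ : ℝ}
    (hab : a < b) (hG : ContDiffOn ℝ 2 G (Icc a b))
    (hGg : ∀ θ ∈ Icc a b, k ^ 2 * G θ + iteratedDerivWithin 2 G (Icc a b) θ = g θ) :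
    ∫ θ in a..b, g θ * sin (k * θ - φ) =
      (derivWithin G (Icc a b) b * sin (k * b - φ) - k * G b * cos (k * b - φ)) -
        (derivWithin G (Icc a b) a * sin (k * a - φ) - k * G a * cos (k * a - φ)) := by
  have hs : UniqueDiffOn ℝ (Icc a b) := uniqueDiffOn_Icc hab
  have hG' : ContDiffOn ℝ 1 (derivWithin G (Icc a b)) (Icc a b) :=
    hG.derivWithin hs (by norm_num)
  have hG'' : ∀ θ, iteratedDerivWithin 2 G (Icc a b) θ =
      derivWithin (derivWithin G (Icc a b)) (Icc a b) θ := by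
    simp [iteratedDerivWithin_succ']
  have hg : ContinuousOn g (Icc a b) :=
    ((continuousOn_const.mul hG.continuousOn).add
      (hG.continuousOn_iteratedDerivWithin le_rfl hs)).congr fun θ hθ => (hGg θ hθ).symm
  have hsin : ContinuousOn (fun θ => sin (k * θ - φ)) (Icc a b) := by fun_prop
  have hcos : ContinuousOn (fun θ => cos (k * θ - φ)) (Icc a b) := by fun_prop
  refine integral_eq_sub_of_hasDerivAt_of_le hab.le
    ((hG'.continuousOn.mul hsin).sub ((continuousOn_const.mul hG.continuousOn).mul hcos))
    (fun x hx => ?_) ((hg.mul hsin).intervalIntegrable_of_Icc hab.le)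
  have hx' : x ∈ Icc a b := Ioo_subset_Icc_self hx
  rw [← hGg x hx', hG'']
  exact (hasDerivWithinAt_derivWithin_mul_sin_sub_mul_cos
    (hG.differentiableOn (by norm_num) x hx') (hG'.differentiableOn (by norm_num) x hx')).hasDerivAt
    (Icc_mem_nhds hx.1 hx.2)

theorem integral_mul_sin_eq_of_sq_mul_add_iteratedDerivWithin_of_eq_zero {g G : ℝ → ℝ}
    {a b k φ : ℝ} (hab : a < b) (hG : ContDiffOn ℝ 2 G (Icc a b))
    (hGg : ∀ θ ∈ Icc a b, k ^ 2 * G θ + iteratedDerivWithin 2 G (Icc a b) θ = g θ)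
    (hGa : G a = 0) (hGb : G b = 0) :
    ∫ θ in a..b, g θ * sin (k * θ - φ) =
      derivWithin G (Icc a b) b * sin (k * b - φ) -
        derivWithin G (Icc a b) a * sin (k * a - φ) := by
  rw [integral_mul_sin_eq_of_sq_mul_add_iteratedDerivWithin hab hG hGg, hGa, hGb]
  ring

theorem elliptic_bvp_boundary_derivatives
    (L : ℝ) (hL0 : 0 < L) (hL : L < π/2)
    (g G : ℝ → ℝ)
    (hgC1 : ContDiffOn ℝ 1 g (Icc 0 L))
    (hgpos : ∀ θ ∈ Icc (0:ℝ) L, 0 ≤ g θ)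
    (hgmono : ∀ θ ∈ Icc (0:ℝ) L, 0 ≤ derivWithin g (Icc 0 L) θ)
    (hGC2 : ContDiffOn ℝ 2 G (Icc 0 L))
    (hGeq : ∀ θ ∈ Icc (0:ℝ) L, 4 * G θ + iteratedDerivWithin 2 G (Icc 0 L) θ = g θ)
    (hbc0 : G 0 = 0) (hbcL : G L = 0) :
    derivWithin G (Icc 0 L) L =
      (1 / Real.sin (2*L)) * ∫ θ in (0:ℝ)..L, g θ * Real.sin (2*θ) ∧
    derivWithin G (Icc 0 L) 0 =
      (Real.cos (2*L) / Real.sin (2*L)) * (∫ θ in (0:ℝ)..L, g θ * Real.sin (2*θ)) -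
        ∫ θ in (0:ℝ)..L, g θ * Real.cos (2*θ) ∧
    0 ≤ derivWithin G (Icc 0 L) L ∧
    derivWithin G (Icc 0 L) 0 ≤ 0 ∧
    0 ≤ derivWithin G (Icc 0 L) 0 + derivWithin G (Icc 0 L) L := by
  have key (φ : ℝ) : ∫ θ in (0:ℝ)..L, g θ * sin (2 * θ - φ) =
      derivWithin G (Icc 0 L) L * sin (2 * L - φ) + derivWithin G (Icc 0 L) 0 * sin φ := by
    rw [integral_mul_sin_eq_of_sq_mul_add_iteratedDerivWithin_of_eq_zero hL0 hGC2
      (fun θ hθ => by rw [← hGeq θ hθ]; norm_num) hbc0 hbcL]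
    simp [sin_neg]
  have hsin := key 0
  have hcos := key (-(π / 2))
  simp only [sub_zero, sin_zero, mul_zero, add_zero] at hsin
  simp only [sub_neg_eq_add, sin_add_pi_div_two, sin_neg, sin_pi_div_two] at hcos
  have hsin2L : 0 < sin (2 * L) := sin_pos_of_pos_of_lt_pi (by linarith) (by linarith)
  have hsinL : 0 < sin L := sin_pos_of_pos_of_lt_pi hL0 (by linarith)
  have hL' : derivWithin G (Icc 0 L) L =
      1 / sin (2 * L) * ∫ θ in (0:ℝ)..L, g θ * sin (2 * θ) := by
    rw [hsin]; field_simp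
  have hI : 0 ≤ ∫ θ in (0:ℝ)..L, g θ * sin (2 * θ) := integral_nonneg hL0.le fun θ hθ =>
    mul_nonneg (hgpos θ hθ)
      (sin_nonneg_of_nonneg_of_le_pi (by linarith [hθ.1]) (by linarith [hθ.2]))
  have hG0sin : 0 ≤ ∫ θ in (0:ℝ)..L, -(g θ * sin (2 * θ - 2 * L)) :=
    integral_nonneg hL0.le fun θ hθ => neg_nonneg.2 (mul_nonpos_of_nonneg_of_nonpos (hgpos θ hθ)
      (sin_nonpos_of_nonpos_of_neg_pi_le (by linarith [hθ.2]) (by linarith [hθ.1])))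
  rw [integral_neg, key, sub_self, sin_zero, mul_zero, zero_add] at hG0sin
  have hpaired := integral_mul_sin_two_mul_sub_nonneg hL0.le (by linarith)
    (monotoneOn_Icc_of_derivWithin_nonneg hgC1.continuousOn
      ((hgC1.differentiableOn (by norm_num)).mono Ioo_subset_Icc_self)
      fun θ hθ => hgmono θ (Ioo_subset_Icc_self hθ))
  rw [key L, show 2 * L - L = L by ring] at hpaired
  refine ⟨hL', ?_, ?_, ?_, ?_⟩
  · rw [hcos, hL']; field_simp; ring
  · rw [hL']; positivity
  · exact nonpos_of_mul_nonpos_left (neg_nonneg.1 hG0sin) hsin2L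
  · exact (mul_nonneg_iff_of_pos_right hsinL).1 (by rw [add_mul]; linarith)
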